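/- arXiv:2304.03964 — 5 statements merged into one kernel-verified Lean document; each statement's English description precedes it below -/
import Mathlib

section
/- Let G be a group acting linearly on a vector space V of finite dimension n over a field, such that every σ ∈ G fixes pointwise a subspace of dimension at least n−1. Then either the invariant subspace V^G has dimension at least n−1, or the coinvariant quotient V_G has dimension at least n−1. -/
/-!
Each `ρ σ - 1` has rank at most one, so its image is `0` or a line `L σ`. If `L σ ≠ L τ` are
lines, a vector `v` fixed by `σ τ` satisfies `τ v - v = -(σ (τ v) - τ v) ∈ L σ ⊓ L τ = 0`, so it
is fixed by both `σ` and `τ`; comparing dimensions, the fixed hyperplanes of `σ`, `τ` and `σ τ`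
coincide. Any `π` with `L π ≠ 0` differs from `L σ` or from `L τ`, so all these hyperplanes are
one and the same, and it is contained in `V^G`. Otherwise all the nonzero lines `L σ` agree and
they span at most a line, whose quotient is `V_G`.
-/

section

open Module Submodule LinearMap

variable {k V : Type*} [Field k] [AddCommGroup V] [Module k V]

theorem Submodule.eq_bot_or_isAtom_of_finrank_le_one [FiniteDimensional k V] {p : Submodule k V}
    (hp : finrank k p ≤ 1) : p = ⊥ ∨ IsAtom p := by
  rcases Nat.le_one_iff_eq_zero_or_eq_one.mp hp with h0 | h1
  · exact .inl (finrank_eq_zero.mp h0)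
  · exact .inr (isAtom_iff_finrank_eq_one.mpr h1)

theorem Submodule.finrank_iSup_le_one_of_isAtom_eq {ι : Type*} [FiniteDimensional k V]
    (p : ι → Submodule k V) (hp : ∀ i, p i = ⊥ ∨ IsAtom (p i))
    (h : ∀ i j, IsAtom (p i) → IsAtom (p j) → p i = p j) :
    finrank k ↥(⨆ i, p i) ≤ 1 := by
  by_cases hatom : ∃ i, IsAtom (p i)
  · obtain ⟨i, hi⟩ := hatom
    have hle : ⨆ j, p j ≤ p i := iSup_le fun j =>
      (hp j).elim (fun hj => hj ▸ bot_le) fun hj => (h j i hj hi).le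
    exact (finrank_mono hle).trans (isAtom_iff_finrank_eq_one.mp hi).le
  · push Not at hatom
    have hbot : ⨆ j, p j = ⊥ := iSup_eq_bot.mpr fun j => (hp j).resolve_right (hatom j)
    rw [hbot, finrank_bot]
    exact zero_le_one

theorem LinearMap.finrank_ker_le_of_finrank_range_le {W : Type*} [AddCommGroup W] [Module k W]
    [FiniteDimensional k V] {f g : V →ₗ[k] W}
    (h : finrank k (range g) ≤ finrank k (range f)) :
    finrank k (ker f) ≤ finrank k (ker g) := by
  have := finrank_range_add_finrank_ker f
  have := finrank_range_add_finrank_ker g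
  omega

theorem LinearMap.finrank_range_le_one_of_finrank_sub_one_le_finrank_ker {W : Type*}
    [AddCommGroup W] [Module k W] [FiniteDimensional k V] {f : V →ₗ[k] W}
    (h : finrank k V - 1 ≤ finrank k (ker f)) :
    finrank k (range f) ≤ 1 := by
  have := finrank_range_add_finrank_ker f
  omega

namespace Module.End

theorem ker_mul_sub_one_le {s t : Module.End k V} (h : Disjoint (range (s - 1)) (range (t - 1))) :
    ker (s * t - 1) ≤ ker (s - 1) ⊓ ker (t - 1) := by
  intro v hv
  have hst : s (t v) = v := sub_eq_zero.mp hv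
  have hx : t v - v = 0 :=
    disjoint_def.mp h _ ⟨-t v, by simp [hst, neg_add_eq_sub]⟩ ⟨v, rfl⟩
  rw [sub_eq_zero] at hx
  rw [hx] at hst
  exact ⟨by simp [hst], by simp [hx]⟩

theorem ker_sub_one_eq_of_range_ne [FiniteDimensional k V] {s t : Module.End k V}
    (hs : IsAtom (range (s - 1))) (ht : IsAtom (range (t - 1)))
    (hst : finrank k (range (s * t - 1)) ≤ 1) (hne : range (s - 1) ≠ range (t - 1)) :
    ker (s - 1) = ker (t - 1) := by
  have hle := ker_mul_sub_one_le (hs.disjoint_of_ne ht hne)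
  have hker_eq {u : Module.End k V} (hu : IsAtom (range (u - 1)))
      (hle : ker (s * t - 1) ≤ ker (u - 1)) : ker (s * t - 1) = ker (u - 1) :=
    eq_of_le_of_finrank_le hle <| finrank_ker_le_of_finrank_range_le <|
      hst.trans (isAtom_iff_finrank_eq_one.mp hu).ge
  exact (hker_eq hs (hle.trans inf_le_left)).symm.trans (hker_eq ht (hle.trans inf_le_right))

theorem finrank_iInf_ker_or_finrank_quotient_iSup_range {M : Type*} [Monoid M]
    [FiniteDimensional k V] (ρ : M →* Module.End k V)
    (h : ∀ σ, finrank k (range (ρ σ - 1)) ≤ 1) :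
    finrank k V - 1 ≤ finrank k ↥(⨅ σ, ker (ρ σ - 1)) ∨
      finrank k V - 1 ≤ finrank k (V ⧸ ⨆ σ, range (ρ σ - 1)) := by
  have hline σ : range (ρ σ - 1) = ⊥ ∨ IsAtom (range (ρ σ - 1)) :=
    eq_bot_or_isAtom_of_finrank_le_one (h σ)
  have hker {σ τ} (hσ : IsAtom (range (ρ σ - 1))) (hτ : IsAtom (range (ρ τ - 1)))
      (hne : range (ρ σ - 1) ≠ range (ρ τ - 1)) : ker (ρ σ - 1) = ker (ρ τ - 1) :=
    ker_sub_one_eq_of_range_ne hσ hτ (map_mul ρ σ τ ▸ h (σ * τ)) hne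
  by_cases hall : ∀ σ τ, IsAtom (range (ρ σ - 1)) → IsAtom (range (ρ τ - 1)) →
      range (ρ σ - 1) = range (ρ τ - 1)
  · right
    have := finrank_iSup_le_one_of_isAtom_eq _ hline hall
    have := finrank_quotient_add_finrank (⨆ σ, range (ρ σ - 1))
    omega
  · left
    push Not at hall
    obtain ⟨σ, τ, hσ, hτ, hne⟩ := hall
    have hle : ker (ρ σ - 1) ≤ ⨅ π, ker (ρ π - 1) := le_iInf fun π => by
      rcases hline π with hπ | hπ
      · rw [range_eq_bot.mp hπ, ker_zero]
        exact le_top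
      by_cases hσπ : range (ρ σ - 1) = range (ρ π - 1)
      · rw [hker hσ hτ hne, hker hτ hπ (hσπ ▸ hne.symm)]
      · rw [hker hσ hπ hσπ]
    calc finrank k V - 1 = finrank k ↥(ker (ρ σ - 1)) := by
          have := finrank_range_add_finrank_ker (ρ σ - 1)
          have := isAtom_iff_finrank_eq_one.mp hσ
          omega
      _ ≤ _ := finrank_mono hle

end Module.End

end

theorem stmt_2 (k : Type*) [Field k] (V : Type*) [AddCommGroup V] [Module k V]
    [FiniteDimensional k V] (n : ℕ) (hn : Module.finrank k V = n)
    (G : Type*) [Group G] (ρ : G →* (V ≃ₗ[k] V))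
    (h : ∀ σ : G, n - 1 ≤ Module.finrank k
          ↥(LinearMap.ker ((ρ σ : V →ₗ[k] V) - LinearMap.id))) :
    n - 1 ≤ Module.finrank k
        ↥(⨅ σ : G, LinearMap.ker ((ρ σ : V →ₗ[k] V) - LinearMap.id)) ∨
      n - 1 ≤ Module.finrank k
        (V ⧸ ⨆ σ : G, LinearMap.range ((ρ σ : V →ₗ[k] V) - LinearMap.id)) := by
  subst hn
  exact Module.End.finrank_iInf_ker_or_finrank_quotient_iSup_range
    (LinearEquiv.automorphismGroup.toLinearMapMonoidHom.comp ρ)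
    fun σ => LinearMap.finrank_range_le_one_of_finrank_sub_one_le_finrank_ker (h σ)
end

section
/- Let G be a group acting linearly on a vector space V of finite dimension n. If there exist σ, τ ∈ G with 1-dimensional images (σ−1)V ≠ (τ−1)V, an element s fixed by σ but not by τ, and an element t fixed by τ but not by σ, then a contradiction follows; more precisely, (τσ−1)V = (τ−1)V while τ(σ−1)t lies in (τσ−1)V but (σ−1)t does not lie in (τ−1)V and τ translates it along (τ−1)V, which is impossible. -/
/-!
Let `A`, `B`, `C` be the images of `σ - 1`, `τ - 1`, `τσ - 1`; each has dimension at most one.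
Since `σ s = s`, the nonzero vector `(τσ - 1) s = (τ - 1) s` lies in `B ∩ C`, so `C = B`.
Since `τ t = t`, `(τσ - 1) t = τ (σ - 1) t`, so `τ u ∈ B` for the nonzero vector `u = (σ - 1) t ∈ A`;
as `τ u - u ∈ B` too, `u ∈ A ∩ B` and hence `A = B`.
-/

section

open Module LinearMap Submodule

variable {K V : Type*} [Field K] [AddCommGroup V] [Module K V]

theorem LinearMap.finrank_range_le_one [FiniteDimensional K V] {W : Type*} [AddCommGroup W]
    [Module K W] {f : V →ₗ[K] W} (h : finrank K V - 1 ≤ finrank K (ker f)) :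
    finrank K (range f) ≤ 1 := by
  have := finrank_range_add_finrank_ker f
  omega

theorem Submodule.eq_span_singleton_of_mem_of_finrank_le_one [FiniteDimensional K V]
    {S : Submodule K V} {w : V} (hS : finrank K S ≤ 1) (hw : w ∈ S) (hw0 : w ≠ 0) :
    S = K ∙ w :=
  (eq_of_le_of_finrank_le ((span_singleton_le_iff_mem w S).2 hw)
    (by rwa [finrank_span_singleton hw0])).symm

theorem Submodule.eq_of_finrank_le_one_of_mem [FiniteDimensional K V] {S T : Submodule K V}
    {w : V} (hS : finrank K S ≤ 1) (hT : finrank K T ≤ 1) (hwS : w ∈ S) (hwT : w ∈ T)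
    (hw0 : w ≠ 0) : S = T :=
  (eq_span_singleton_of_mem_of_finrank_le_one hS hwS hw0).trans
    (eq_span_singleton_of_mem_of_finrank_le_one hT hwT hw0).symm

theorem Module.End.sub_mem_range_sub_one (f : Module.End K V) (x : V) :
    f x - x ∈ range (f - 1) :=
  ⟨x, rfl⟩

theorem Module.End.range_sub_one_eq_of_fixed [FiniteDimensional K V] {f g : Module.End K V}
    (hf : finrank K (range (f - 1)) ≤ 1) (hg : finrank K (range (g - 1)) ≤ 1)
    (hgf : finrank K (range (g * f - 1)) ≤ 1) {s t : V}
    (hfs : f s = s) (hgs : g s ≠ s) (hgt : g t = t) (hft : f t ≠ t) :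
    range (f - 1) = range (g - 1) := by
  have hgf_eq : range (g * f - 1) = range (g - 1) := by
    refine eq_of_finrank_le_one_of_mem hgf hg ?_ (sub_mem_range_sub_one g s) (sub_ne_zero.2 hgs)
    simpa [hfs] using sub_mem_range_sub_one (g * f) s
  have hgu : g (f t - t) ∈ range (g - 1) := by
    rw [← hgf_eq]
    convert sub_mem_range_sub_one (g * f) t using 1
    simp [hgt]
  have hu : f t - t ∈ range (g - 1) := by
    simpa using sub_mem hgu (sub_mem_range_sub_one g (f t - t))
  exact eq_of_finrank_le_one_of_mem hf hg (sub_mem_range_sub_one f t) hu (sub_ne_zero.2 hft)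

end

theorem stmt_3_general (k : Type*) [Field k] (V : Type*) [AddCommGroup V] [Module k V]
    [FiniteDimensional k V] (n : ℕ) (hn : Module.finrank k V = n)
    (G : Type*) [Group G] (ρ : G →* (V ≃ₗ[k] V))
    (hall : ∀ g : G, n - 1 ≤ Module.finrank k
          ↥(LinearMap.ker ((ρ g : V →ₗ[k] V) - LinearMap.id)))
    (σ τ : G)
    (hne : LinearMap.range ((ρ σ : V →ₗ[k] V) - LinearMap.id) ≠
           LinearMap.range ((ρ τ : V →ₗ[k] V) - LinearMap.id))
    (s : V) (hs : ρ σ s = s) (hs' : ρ τ s ≠ s)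
    (t : V) (ht : ρ τ t = t) (ht' : ρ σ t ≠ t) :
    False := by
  subst hn
  have hrank (g : G) : Module.finrank k (LinearMap.range ((ρ g : V →ₗ[k] V) - 1)) ≤ 1 :=
    LinearMap.finrank_range_le_one (hall g)
  refine hne (Module.End.range_sub_one_eq_of_fixed (hrank σ) (hrank τ) ?_ hs hs' ht ht')
  have := hrank (τ * σ)
  rwa [map_mul, LinearEquiv.coe_toLinearMap_mul] at this

theorem stmt_3 (k : Type*) [Field k] (V : Type*) [AddCommGroup V] [Module k V]
    [FiniteDimensional k V] (n : ℕ) (hn : Module.finrank k V = n)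
    (G : Type*) [Group G] (ρ : G →* (V ≃ₗ[k] V))
    (hall : ∀ g : G, n - 1 ≤ Module.finrank k
          ↥(LinearMap.ker ((ρ g : V →ₗ[k] V) - LinearMap.id)))
    (σ τ : G)
    (hσ : Module.finrank k ↥(LinearMap.range ((ρ σ : V →ₗ[k] V) - LinearMap.id)) = 1)
    (hτ : Module.finrank k ↥(LinearMap.range ((ρ τ : V →ₗ[k] V) - LinearMap.id)) = 1)
    (hne : LinearMap.range ((ρ σ : V →ₗ[k] V) - LinearMap.id) ≠
           LinearMap.range ((ρ τ : V →ₗ[k] V) - LinearMap.id))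
    (s : V) (hs : ρ σ s = s) (hs' : ρ τ s ≠ s)
    (t : V) (ht : ρ τ t = t) (ht' : ρ σ t ≠ t) :
    False :=
  stmt_3_general k V n hn G ρ hall σ τ hne s hs hs' t ht ht'
end

section
/- Let K be a number field and x ∈ K* globally primitive (x ∉ (K*)^ℓ for every prime ℓ). For every squarefree integer N > 1, with K_m the splitting field of X^m − x over K, there exists σ ∈ Gal(K_N/K) whose restriction to K_ℓ is nontrivial for every prime ℓ dividing N. -/
open Polynomial IntermediateField

universe u

/-- Irreducibility of `X^N - x` for squarefree `N` over a char-zero field. -/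
theorem irr_aux {K : Type u} [Field K] [CharZero K] {x : K}
    (hprim : ∀ ℓ : ℕ, ℓ.Prime → ∀ y : K, y ^ ℓ ≠ x)
    {N : ℕ} (hsq : Squarefree N) (hN : 0 < N) :
    Irreducible (X ^ N - C x) := by
  rcases Nat.even_or_odd N with he | ho
  · -- N even, N = (N/2) * 2 with N/2 odd
    obtain ⟨m, hm⟩ : 2 ∣ N := he.two_dvd
    have hmo : Odd m := by
      rw [← Nat.not_even_iff_odd]
      intro hme
      obtain ⟨k, hk⟩ := hme.two_dvd
      simpa using hsq 2 ⟨k, by omega⟩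
    have h2 : Irreducible (X ^ 2 - C x) :=
      X_pow_sub_C_irreducible_of_prime Nat.prime_two (hprim 2 Nat.prime_two)
    have := X_pow_mul_sub_C_irreducible (n := m) h2 ?_
    · rwa [mul_comm m 2, ← hm] at this
    intro E _ _ y hy
    have hyint : IsIntegral K y := not_not.mp fun h ↦ by
      simpa only [degree_zero, degree_X_pow_sub_C two_pos, WithBot.natCast_ne_bot]
        using congr_arg degree (hy.symm.trans (dif_neg h))
    apply X_pow_sub_C_irreducible_of_odd hmo
    intro q hq hqm b hbq
    have hqo : Odd q := hq.odd_of_ne_two (by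
      rintro rfl
      exact (Nat.not_even_iff_odd.mpr hmo) (even_iff_two_dvd.mpr hqm))
    refine hprim q hq (-(Algebra.norm K b)) ?_
    have h1 : (Algebra.norm K b) ^ q = Algebra.norm K (AdjoinSimple.gen K y) := by
      rw [← map_pow, hbq]
    have h2 : Algebra.norm K (AdjoinSimple.gen K y) = -x := by
      rw [← IntermediateField.adjoin.powerBasis_gen hyint,
        Algebra.PowerBasis.norm_gen_eq_coeff_zero_minpoly]
      simp [IntermediateField.adjoin.powerBasis_gen, minpoly_gen, hy]
    rw [hqo.neg_pow, h1, h2, neg_neg]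
  · exact X_pow_sub_C_irreducible_of_odd ho fun p hp _ ↦ hprim p hp

/-- The `m`-division field of `x` inside an algebraic closure of `K`:
the splitting field of `X^m - x`, generated by all `m`-th roots of `x`. -/
noncomputable def divField (K : Type*) [Field K] (x : K) (m : ℕ) :
    IntermediateField K (AlgebraicClosure K) :=
  IntermediateField.adjoin K
    {z : AlgebraicClosure K | z ^ m = algebraMap K (AlgebraicClosure K) x}

theorem stmt_8 (K : Type*) [Field K] [NumberField K] (x : K) (hx : x ≠ 0)
    (hprim : ∀ ℓ : ℕ, ℓ.Prime → ∀ y : K, y ^ ℓ ≠ x)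
    (N : ℕ) (hsqfree : Squarefree N) (hN : 1 < N) :
    ∃ σ : (divField K x N) ≃ₐ[K] (divField K x N),
      ∀ ℓ : ℕ, ℓ.Prime → ℓ ∣ N →
        ∃ z : divField K x N, (z : AlgebraicClosure K) ∈ divField K x ℓ ∧ σ z ≠ z := by
  set L := AlgebraicClosure K
  have hN0 : 0 < N := by omega
  haveI : CharZero L := charZero_of_injective_algebraMap (algebraMap K L).injective
  haveI : NeZero (N : L) := ⟨by exact_mod_cast Nat.cast_ne_zero.mpr hN0.ne'⟩
  -- the irreducible polynomial
  have hirr : Irreducible (Polynomial.X ^ N - Polynomial.C x) := irr_aux hprim hsqfree hN0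
  -- a root α
  obtain ⟨α, hα⟩ := IsAlgClosed.exists_pow_nat_eq (k := L) (algebraMap K L x) hN0
  have hα0 : α ≠ 0 := fun h ↦ hx (by
    apply (algebraMap K L).injective
    rw [map_zero, ← hα, h, zero_pow hN0.ne'])
  -- a primitive N-th root of unity
  obtain ⟨ζ, hζ0⟩ := IsAlgClosed.exists_root (Polynomial.cyclotomic N L)
    (by simpa using (Polynomial.degree_cyclotomic_pos N L hN0).ne')
  have hζ : IsPrimitiveRoot ζ N := (Polynomial.isRoot_cyclotomic_iff).mp hζ0
  -- minimal polynomial of α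
  have hmin : minpoly K α = Polynomial.X ^ N - Polynomial.C x := by
    refine (minpoly.eq_of_irreducible_of_monic hirr ?_ (monic_X_pow_sub_C x hN0.ne')).symm
    simp [hα]
  -- an automorphism τ of L with τ α = ζ * α
  have halg : IsAlgebraic K α := (Algebra.IsAlgebraic.isAlgebraic (R := K) α)
  obtain ⟨τ, hτ⟩ := minpoly.exists_algEquiv_of_root' (L := L) halg (x := ζ * α) (by
    rw [hmin]
    simp [mul_pow, hζ.pow_eq_one, hα])
  -- divField is normal
  have hset : {z : L | z ^ N = algebraMap K L x}
      = (Polynomial.X ^ N - Polynomial.C x : Polynomial K).rootSet L := by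
    ext z
    simp only [Set.mem_setOf_eq, Polynomial.mem_rootSet,
      ne_eq, X_pow_sub_C_ne_zero hN0 x, not_false_eq_true, true_and,
      map_sub, map_pow, Polynomial.aeval_X, Polynomial.aeval_C, sub_eq_zero]
  haveI hnorm : Normal K (divField K x N) := by
    rw [divField, hset]
    exact Normal.of_isSplittingField
      (hFEp := IntermediateField.adjoin_rootSet_isSplittingField
        (IsAlgClosed.splits _))
  refine ⟨τ.restrictNormal (divField K x N), ?_⟩
  intro ℓ hℓ hdvd
  have hαmem : α ∈ divField K x N := IntermediateField.subset_adjoin K _ hα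
  set k := N / ℓ with hk
  have hkℓ : k * ℓ = N := Nat.div_mul_cancel hdvd
  have hk0 : 0 < k := Nat.div_pos (Nat.le_of_dvd hN0 hdvd) hℓ.pos
  have hkN : k < N := Nat.div_lt_self hN0 hℓ.one_lt
  refine ⟨⟨α, hαmem⟩ ^ k, ?_, ?_⟩
  · refine IntermediateField.subset_adjoin K _ ?_
    show ((⟨α, hαmem⟩ ^ k : divField K x N) : L) ^ ℓ = algebraMap K L x
    push_cast
    rw [← pow_mul, hkℓ, hα]
  · intro hcontra
    have hcoe : ((τ.restrictNormal (divField K x N)) (⟨α, hαmem⟩ ^ k) : L)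
        = τ ((⟨α, hαmem⟩ ^ k : divField K x N) : L) := by
      exact AlgEquiv.restrictNormal_commutes τ (divField K x N) _
    have h1 : ((⟨α, hαmem⟩ ^ k : divField K x N) : L) = α ^ k := by push_cast; ring
    have h2 : τ (α ^ k) = ζ ^ k * α ^ k := by rw [map_pow, hτ, mul_pow]
    have : ζ ^ k * α ^ k = α ^ k := by
      rw [← h2, ← h1, ← hcoe, hcontra, h1]
    have hζk : ζ ^ k = 1 := by
      have := mul_right_cancel₀ (pow_ne_zero k hα0) (this.trans (one_mul (α ^ k)).symm)
      exact this
    exact hζ.pow_ne_one_of_pos_of_lt hk0.ne' hkN hζk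
end

section
/- Let a, b ∈ K (field of characteristic 0) and λ ∈ K with λ² ≠ b and 2λ ≠ a. Set D = (a − 2λ)/(λ² − b) and Y = (λ² − aλ + b)/(λ² − b). Then Y² = 1 + aD + bD², i.e., the point (1, Y) lies on the quadratic twist E_D : y² = x(x² + aDx + bD²) of y² = x(x²+ax+b). -/
theorem stmt_11_general (K : Type*) [Field K] (a b lam : K)
    (h1 : lam ^ 2 ≠ b) :
    ((lam ^ 2 - a * lam + b) / (lam ^ 2 - b)) ^ 2 =
      1 + a * ((a - 2 * lam) / (lam ^ 2 - b)) +
        b * ((a - 2 * lam) / (lam ^ 2 - b)) ^ 2 := by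
  have : lam ^ 2 - b ≠ 0 := sub_ne_zero.mpr h1
  field_simp
  ring

theorem stmt_11 (K : Type*) [Field K] [CharZero K] (a b lam : K)
    (h1 : lam ^ 2 ≠ b) (h2 : 2 * lam ≠ a) :
    ((lam ^ 2 - a * lam + b) / (lam ^ 2 - b)) ^ 2 =
      1 + a * ((a - 2 * lam) / (lam ^ 2 - b)) +
        b * ((a - 2 * lam) / (lam ^ 2 - b)) ^ 2 :=
  stmt_11_general K a b lam h1
end

section
/- Let A be a finite abelian group and P ∈ A. Suppose a prime ℓ divides the index [A : ⟨P⟩]. Then either A contains a subgroup isomorphic to Z/ℓZ × Z/ℓZ, or there exists Q ∈ A with ℓQ = P and A has an element of order ℓ. -/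
/-!
Let `ℓA` be the image of multiplication by `ℓ`, so that `[A : ℓA] = |A[ℓ]|`. If `|A[ℓ]| > ℓ`, the
`𝔽_ℓ`-vector space `A[ℓ]` has dimension at least two. If `P ∈ ℓA`, Cauchy's theorem applies since
`ℓ ∣ |A|`. Otherwise `P` generates `A / ℓA`, which has order at most `ℓ`, so `A = ⟨P⟩ + ℓA`; then
multiplication by `ℓ` is surjective, hence injective, on `A / ⟨P⟩`, and `ℓ ∤ [A : ⟨P⟩]`.
-/

open AddSubgroup

theorem LinearMap.exists_injective_prod_of_one_lt_finrank {K V : Type*} [Field K] [AddCommGroup V]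
    [Module K V] [Module.Finite K V] (h : 1 < Module.finrank K V) :
    ∃ φ : K × K →ₗ[K] V, Function.Injective φ := by
  have := Module.nontrivial_of_finrank_pos (R := K) (by omega : 0 < Module.finrank K V)
  obtain ⟨x, hx⟩ := exists_ne (0 : V)
  obtain ⟨y, hxy⟩ := exists_linearIndependent_pair_of_one_lt_finrank h hx
  refine ⟨(LinearMap.toSpanSingleton K V x).coprod (LinearMap.toSpanSingleton K V y), ?_⟩
  rw [← LinearMap.ker_eq_bot, LinearMap.ker_eq_bot']
  rintro ⟨s, t⟩ hst
  simpa using LinearIndependent.pair_iff.mp hxy s t (by simpa using hst)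

theorem exists_injective_zmod_prod_of_lt_card_torsionBy {A : Type*} [AddCommGroup A] {ℓ : ℕ}
    [Fact ℓ.Prime] [Finite (torsionBy A ℓ)] (h : ℓ < Nat.card (torsionBy A ℓ)) :
    ∃ φ : ZMod ℓ × ZMod ℓ →+ A, Function.Injective φ := by
  let := torsionBy.zmodModule (A := A) (n := ℓ)
  have : Module.Finite (ZMod ℓ) (torsionBy A ℓ) := Module.Finite.of_finite
  have hrank : 1 < Module.finrank (ZMod ℓ) (torsionBy A ℓ) := by
    rw [Module.natCard_eq_pow_finrank (K := ZMod ℓ), Nat.card_zmod] at h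
    exact (Nat.pow_lt_pow_iff_right (Fact.out : ℓ.Prime).one_lt).mp (by simpa using h)
  obtain ⟨φ, hφ⟩ := LinearMap.exists_injective_prod_of_one_lt_finrank hrank
  exact ⟨(torsionBy A ℓ).subtype.comp φ.toAddMonoidHom, Subtype.val_injective.comp hφ⟩

theorem AddSubgroup.index_range_nsmul_eq_card_torsionBy {A : Type*} [AddCommGroup A] [Finite A]
    (n : ℕ) :
    (nsmulAddMonoidHom n : A →+ A).range.index = Nat.card (torsionBy A n) := by
  rw [AddSubgroup.index_range]
  congr! 2
  ext x
  simp

theorem not_dvd_card_of_nsmul_surjective {B : Type*} [AddGroup B] [Finite B] {ℓ : ℕ}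
    [Fact ℓ.Prime] (h : Function.Surjective (fun b : B ↦ ℓ • b)) : ¬ ℓ ∣ Nat.card B := by
  intro hdvd
  obtain ⟨b, hb⟩ := exists_prime_addOrderOf_dvd_card' ℓ hdvd
  have hb0 : b = 0 := Finite.injective_iff_surjective.mpr h <| by
    simp only [← hb, addOrderOf_nsmul_eq_zero, nsmul_zero]
  exact (Fact.out : ℓ.Prime).ne_one (hb ▸ hb0 ▸ addOrderOf_zero)

theorem AddSubgroup.zmultiples_sup_eq_top_of_index_le {A : Type*} [AddCommGroup A] [Finite A]
    {H : AddSubgroup A} {P : A} (h : H.index ≤ addOrderOf (P : A ⧸ H)) :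
    zmultiples P ⊔ H = ⊤ := by
  have htop : zmultiples (P : A ⧸ H) = ⊤ := by
    apply eq_top_of_le_card
    rwa [Nat.card_zmultiples, ← index_eq_card]
  rw [← QuotientAddGroup.ker_mk' H, ← comap_map_eq, AddMonoidHom.map_zmultiples,
    QuotientAddGroup.coe_mk', htop, comap_top]

theorem QuotientAddGroup.nsmul_surjective_of_sup_range_eq_top {A : Type*} [AddCommGroup A]
    {H : AddSubgroup A} {n : ℕ} (h : H ⊔ (nsmulAddMonoidHom n : A →+ A).range = ⊤) :
    Function.Surjective (fun b : A ⧸ H ↦ n • b) := by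
  intro q
  induction q using QuotientAddGroup.induction_on with
  | H a =>
    obtain ⟨x, hx, _, ⟨b, rfl⟩, rfl⟩ := mem_sup.mp (h ▸ mem_top a)
    refine ⟨b, ?_⟩
    simp [(QuotientAddGroup.eq_zero_iff x).mpr hx]

theorem stmt_19 (A : Type*) [AddCommGroup A] [Fintype A] (P : A) (ℓ : ℕ)
    (hℓ : ℓ.Prime) (hdvd : ℓ ∣ (AddSubgroup.zmultiples P).index) :
    (∃ φ : (ZMod ℓ × ZMod ℓ) →+ A, Function.Injective φ) ∨
      ((∃ Q : A, ℓ • Q = P) ∧ ∃ a : A, addOrderOf a = ℓ) := by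
  have := Fact.mk hℓ
  by_cases hbig : ℓ < Nat.card (torsionBy A ℓ)
  · exact .inl (exists_injective_zmod_prod_of_lt_card_torsionBy hbig)
  refine .inr ⟨?_, exists_prime_addOrderOf_dvd_card' ℓ (hdvd.trans (index_dvd_card _))⟩
  by_contra hP
  set ℓA := (nsmulAddMonoidHom ℓ : A →+ A).range
  have hPℓA : (P : A ⧸ ℓA) ≠ 0 := fun h ↦ hP ((QuotientAddGroup.eq_zero_iff P).mp h)
  have hordP : addOrderOf (P : A ⧸ ℓA) = ℓ :=
    addOrderOf_eq_prime (by rw [← QuotientAddGroup.mk_nsmul,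
      QuotientAddGroup.eq_zero_iff]; exact ⟨P, rfl⟩) hPℓA
  have hsup : zmultiples P ⊔ ℓA = ⊤ :=
    zmultiples_sup_eq_top_of_index_le (by rw [hordP, index_range_nsmul_eq_card_torsionBy]; omega)
  exact not_dvd_card_of_nsmul_surjective
    (QuotientAddGroup.nsmul_surjective_of_sup_range_eq_top hsup) (by rwa [← index_eq_card])
end
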